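/- The fan graph F₅ is not an SPN graph; that is, there exists a copositive 5×5 real symmetric matrix A with G(A) = F₅ that is not SPN. Here F₅ is the graph on vertex set {1,2,3,4,5} whose edges are {1,2}, {2,4}, {4,5}, {1,3}, {2,3}, {3,4}, {3,5} (a path 1−2−4−5 of length 3 together with the vertex 3 adjacent to all four path vertices). -/

import Mathlib

open Matrix

/-- A real symmetric matrix `A` is *copositive* if `xᵀAx ≥ 0` for every
entrywise nonnegative vector `x`. -/
def Copositive {ι : Type*} [Fintype ι] (A : Matrix ι ι ℝ) : Prop :=
  ∀ x : ι → ℝ, (∀ i, 0 ≤ x i) → 0 ≤ x ⬝ᵥ A.mulVec x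

/-- A real symmetric matrix is *SPN* if it is the sum of a positive semidefinite
matrix and a symmetric entrywise nonnegative matrix. -/
def IsSPN {ι : Type*} [Fintype ι] (A : Matrix ι ι ℝ) : Prop :=
  ∃ P N : Matrix ι ι ℝ, P.PosSemidef ∧ N.IsSymm ∧ (∀ i j, 0 ≤ N i j) ∧ A = P + N

/-- The graph `G(A)` of a symmetric real matrix: `i ≠ j` are adjacent iff `A i j ≠ 0`. -/
def matrixGraph {ι : Type*} (A : Matrix ι ι ℝ) : SimpleGraph ι where
  Adj i j := i ≠ j ∧ (A i j ≠ 0 ∨ A j i ≠ 0)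
  symm := by
    refine ⟨?_⟩
    intro i j h
    exact ⟨h.1.symm, h.2.symm⟩
  loopless := by
    refine ⟨?_⟩
    intro i h
    exact h.1 rfl

/-- A graph `G` is an *SPN graph* if every copositive symmetric real matrix whose graph
is isomorphic to `G` is SPN. -/
def IsSPNGraph {V : Type*} [Fintype V] (G : SimpleGraph V) : Prop :=
  ∀ (n : ℕ) (A : Matrix (Fin n) (Fin n) ℝ), A.IsSymm → Copositive A →
    Nonempty (matrixGraph A ≃g G) → IsSPN A

/-- The fan graph `F₅` (vertices `0,…,4` standing for `1,…,5`): the path `1-2-4-5`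
together with vertex `3` joined to all four path vertices. -/
def fanF5 : SimpleGraph (Fin 5) :=
  SimpleGraph.fromEdgeSet
    {s(0, 1), s(1, 3), s(3, 4), s(0, 2), s(1, 2), s(2, 3), s(2, 4)}

/-!
The witness is the banded Toeplitz matrix with diagonals `1, -1, 1, 0, 0`, whose graph is `F₅`.
Its quadratic form is `(x₀ - x₁ + x₂ - x₃ + x₄)² + 2x₀(x₃ - x₄) + 2x₁x₄`, and also
`(x₀ - x₁ + x₂)² + (x₃ - x₄)² + 2x₁x₃ + 2x₂(x₄ - x₃)`; on the nonnegative orthant one of the two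
is visibly nonnegative, so the matrix is copositive. It is not SPN by duality: the Gram matrix `W`
of the vectors `(1,0,-1,0,1)`, `(1,2,1,0,0)`, `(0,0,1,2,1)` is positive semidefinite and entrywise
nonnegative, while `⟨A, W⟩ = -1 + 0 + 0 < 0`.
-/

theorem not_isSPN_of_sum_outer_nonneg {ι κ : Type*} [Fintype ι] [Fintype κ]
    (A : Matrix ι ι ℝ) (v : κ → ι → ℝ) (hW : ∀ i j, 0 ≤ ∑ k, v k i * v k j)
    (hA : ∑ k, v k ⬝ᵥ A *ᵥ v k < 0) : ¬ IsSPN A := by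
  rintro ⟨P, N, hP, -, hN, rfl⟩
  have hPv : 0 ≤ ∑ k, v k ⬝ᵥ P *ᵥ v k :=
    Finset.sum_nonneg fun k _ => by simpa using hP.dotProduct_mulVec_nonneg (v k)
  have hNv_eq : ∑ k, v k ⬝ᵥ N *ᵥ v k = ∑ i, ∑ j, N i j * ∑ k, v k i * v k j := by
    simp only [dotProduct, mulVec, Finset.mul_sum]
    rw [Finset.sum_comm]
    refine Finset.sum_congr rfl fun i _ => ?_
    rw [Finset.sum_comm]
    exact Finset.sum_congr rfl fun j _ => Finset.sum_congr rfl fun k _ => by ring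
  have hNv : 0 ≤ ∑ k, v k ⬝ᵥ N *ᵥ v k := hNv_eq ▸
    Finset.sum_nonneg fun i _ => Finset.sum_nonneg fun j _ => mul_nonneg (hN i j) (hW i j)
  simp only [add_mulVec, dotProduct_add, Finset.sum_add_distrib] at hA
  linarith

noncomputable def fanF5Matrix : Matrix (Fin 5) (Fin 5) ℝ :=
  !![1, -1, 1, 0, 0; -1, 1, -1, 1, 0; 1, -1, 1, -1, 1; 0, 1, -1, 1, -1; 0, 0, 1, -1, 1]

theorem fanF5Matrix_isSymm : fanF5Matrix.IsSymm := by
  refine Matrix.IsSymm.ext fun i j => ?_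
  fin_cases i <;> fin_cases j <;> simp [fanF5Matrix]

theorem matrixGraph_fanF5Matrix : matrixGraph fanF5Matrix = fanF5 := by
  ext i j
  fin_cases i <;> fin_cases j <;> simp [matrixGraph, fanF5, fanF5Matrix]

theorem fanF5Matrix_quadForm (x : Fin 5 → ℝ) : x ⬝ᵥ fanF5Matrix *ᵥ x =
    (x 0 - x 1 + x 2 - x 3 + x 4) ^ 2 + 2 * x 0 * (x 3 - x 4) + 2 * x 1 * x 4 := by
  simp [fanF5Matrix, mulVec, dotProduct, Fin.sum_univ_five]
  ring

theorem fanF5Matrix_copositive : Copositive fanF5Matrix := by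
  intro x hx
  rw [fanF5Matrix_quadForm]
  rcases le_total (x 4) (x 3) with h | h
  · linarith [sq_nonneg (x 0 - x 1 + x 2 - x 3 + x 4), mul_nonneg (hx 0) (sub_nonneg.2 h),
      mul_nonneg (hx 1) (hx 4)]
  · linarith [sq_nonneg (x 0 - x 1 + x 2), sq_nonneg (x 3 - x 4), mul_nonneg (hx 1) (hx 3),
      mul_nonneg (hx 2) (sub_nonneg.2 h)]

theorem fanF5Matrix_not_isSPN : ¬ IsSPN fanF5Matrix := by
  apply not_isSPN_of_sum_outer_nonneg _
    (![![1, 0, -1, 0, 1], ![1, 2, 1, 0, 0], ![0, 0, 1, 2, 1]] : Fin 3 → Fin 5 → ℝ)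
  · intro i j
    fin_cases i <;> fin_cases j <;> simp [Fin.sum_univ_three]
    norm_num
  · simp [fanF5Matrix_quadForm, Fin.sum_univ_three]
    norm_num

/-- The fan graph `F₅` is not an SPN graph; that is, there exists a
copositive symmetric `5 × 5` real matrix `A` with `G(A) = F₅` that is not SPN. -/
theorem fanF5_not_isSPNGraph :
    ¬ IsSPNGraph fanF5 ∧
    ∃ A : Matrix (Fin 5) (Fin 5) ℝ,
      A.IsSymm ∧ Copositive A ∧ matrixGraph A = fanF5 ∧ ¬ IsSPN A := by
  refine ⟨fun hG => fanF5Matrix_not_isSPN ?_, fanF5Matrix, fanF5Matrix_isSymm,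
    fanF5Matrix_copositive, matrixGraph_fanF5Matrix, fanF5Matrix_not_isSPN⟩
  exact hG 5 fanF5Matrix fanF5Matrix_isSymm fanF5Matrix_copositive
    ⟨matrixGraph_fanF5Matrix ▸ SimpleGraph.Iso.refl⟩
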